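/- arXiv:2304.08121 — 5 statements merged into one kernel-verified Lean document; each statement's English description precedes it below -/
import Mathlib

section
/- Let $\mathbb{F}_{q^s}$ be a finite field, $N > 1$ with $N-1 \mid q^s-1$, and let $X_N = \{(1,z) \mid z^N = z\} \cup \{(0,1)\} \subset \mathbb{F}_{q^s}^2$. Then the vanishing ideal $I(X_N) \subseteq \mathbb{F}_{q^s}[x_0, x_1]$ is generated by the three polynomials $x_0^2 - x_0$, $x_1^N - x_1$, and $(x_0 - 1)(x_1 - 1)$. -/
open MvPolynomial

/-- The set of points `X_N = {(1, z) | z ^ N = z} ∪ {(0, 1)}` in `F²`. -/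
def XNset (F : Type) [Field F] [Fintype F] [DecidableEq F] (N : ℕ) : Finset (F × F) :=
  insert ((0 : F), (1 : F))
    ((Finset.univ.filter (fun z : F => z ^ N = z)).image (fun z => ((1 : F), z)))

/-!
Modulo `x₀² - x₀` every `f` is congruent to its interpolant `(1 - x₀) f(0, x₁) + x₀ f(1, x₁)`.
If `f` vanishes on `X_N`, then `x₁ - 1` divides `f(0, x₁)`, and `f(1, x₁)` vanishes on `Y_N`.
Since `N - 1 ∣ q^s - 1`, the polynomial `x^N - x` divides `x^{q^s} - x = ∏_{a ∈ F} (x - a)`,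
so it is the product of the `x - z`, `z ∈ Y_N`, and divides `f(1, x₁)`.
Both summands of the interpolant therefore lie in the ideal generated by
`(x₀ - 1)(x₁ - 1)` and `x₁^N - x₁`.
-/

open scoped Polynomial

theorem Polynomial.X_pow_sub_X_dvd_X_pow_sub_X {R : Type*} [CommRing R] {m n : ℕ} (hm : 0 < m)
    (hmn : m - 1 ∣ n - 1) (hn : 0 < n) :
    (Polynomial.X ^ m - Polynomial.X : R[X]) ∣ Polynomial.X ^ n - Polynomial.X := by
  obtain ⟨k, hk⟩ := hmn
  have factor : ∀ l, 0 < l →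
      (Polynomial.X ^ l - Polynomial.X : R[X]) = Polynomial.X * (Polynomial.X ^ (l - 1) - 1) :=
    fun l hl => by rw [mul_sub, ← pow_succ', Nat.sub_add_cancel hl, mul_one]
  rw [factor m hm, factor n hn, hk]
  exact mul_dvd_mul_left _ (pow_one_sub_dvd_pow_mul_sub_one _ _ k)

/-- `X ^ q - X` is the product of all `X - a`, so its divisors have simple roots in `K`. -/
theorem FiniteField.dvd_of_dvd_X_pow_card_sub_X {K : Type*} [Field K] [Fintype K] {g p : K[X]}
    (hg : g ∣ Polynomial.X ^ Fintype.card K - Polynomial.X) (hg0 : g ≠ 0)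
    (hp : ∀ z, g.IsRoot z → p.IsRoot z) : g ∣ p := by
  rcases eq_or_ne p 0 with rfl | hp0
  · exact dvd_zero g
  have hG0 := FiniteField.X_pow_card_sub_X_ne_zero K (Fintype.one_lt_card (α := K))
  have hG_splits : (Polynomial.X ^ Fintype.card K - Polynomial.X : K[X]).Splits := by
    rw [Polynomial.splits_iff_card_roots, FiniteField.roots_X_pow_card_sub_X,
      FiniteField.X_pow_card_sub_X_natDegree_eq K Fintype.one_lt_card]
    rfl
  have hg_nodup : g.roots.Nodup := by
    refine Multiset.nodup_of_le (Polynomial.roots.le_of_dvd hG0 hg) ?_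
    rw [FiniteField.roots_X_pow_card_sub_X]
    exact Finset.univ.nodup
  refine (hG_splits.of_dvd hG0 hg).dvd_of_roots_le_roots hg0 ?_
  rw [Multiset.le_iff_subset hg_nodup]
  intro z hz
  exact (Polynomial.mem_roots hp0).2 (hp z ((Polynomial.mem_roots hg0).1 hz))

section TwoVariables

variable {R : Type*} [CommRing R]

noncomputable def ofX₁ : R[X] →ₐ[R] MvPolynomial (Fin 2) R :=
  Polynomial.aeval (X 1)

noncomputable def evalX₀ (a : R) : MvPolynomial (Fin 2) R →ₐ[R] R[X] :=
  aeval ![Polynomial.C a, Polynomial.X]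

@[simp]
theorem ofX₁_C (r : R) : ofX₁ (Polynomial.C r) = C r :=
  Polynomial.aeval_C _ r

@[simp]
theorem ofX₁_X : ofX₁ (Polynomial.X : R[X]) = X 1 :=
  Polynomial.aeval_X _

@[simp]
theorem evalX₀_C (a r : R) : evalX₀ a (C r) = Polynomial.C r :=
  aeval_C _ r

@[simp]
theorem evalX₀_X_zero (a : R) : evalX₀ a (X 0) = Polynomial.C a :=
  aeval_X _ 0

@[simp]
theorem evalX₀_X_one (a : R) : evalX₀ a (X 1) = Polynomial.X :=
  aeval_X _ 1

theorem eval_evalX₀ (a z : R) (f : MvPolynomial (Fin 2) R) :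
    (evalX₀ a f).eval z = eval ![a, z] f := by
  induction f using MvPolynomial.induction_on with
  | C r => simp
  | add f g hf hg => simp [hf, hg]
  | mul_X f i hf => fin_cases i <;> simp [hf]

-- Lagrange interpolation in `x₀` at the nodes `0` and `1`.
theorem sub_interpolate_mem_span (f : MvPolynomial (Fin 2) R) :
    f - ((1 - X 0) * ofX₁ (evalX₀ 0 f) + X 0 * ofX₁ (evalX₀ 1 f)) ∈
      Ideal.span {X 0 ^ 2 - X 0} := by
  simp only [Ideal.mem_span_singleton']
  induction f using MvPolynomial.induction_on with
  | C r => exact ⟨0, by simp only [evalX₀_C, ofX₁_C]; ring⟩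
  | add f g hf hg =>
    obtain ⟨u, hu⟩ := hf
    obtain ⟨v, hv⟩ := hg
    exact ⟨u + v, by simp only [map_add]; linear_combination hu + hv⟩
  | mul_X f i hf =>
    obtain ⟨u, hu⟩ := hf
    fin_cases i
    · refine ⟨X 0 * u + ofX₁ (evalX₀ 1 f) - ofX₁ (evalX₀ 0 f), ?_⟩
      simp only [Fin.zero_eta, map_mul, evalX₀_X_zero, map_zero, map_one, mul_zero, mul_one]
      linear_combination X 0 * hu
    · refine ⟨u * X 1, ?_⟩
      simp only [Fin.mk_one, map_mul, evalX₀_X_one, ofX₁_X]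
      linear_combination X 1 * hu

variable (R) in
noncomputable def idealXN (N : ℕ) : Ideal (MvPolynomial (Fin 2) R) :=
  Ideal.span {X 0 ^ 2 - X 0, X 1 ^ N - X 1, (X 0 - 1) * (X 1 - 1)}

theorem mem_idealXN_of_dvd {N : ℕ} {f : MvPolynomial (Fin 2) R}
    (h₀ : Polynomial.X - Polynomial.C 1 ∣ evalX₀ 0 f)
    (h₁ : Polynomial.X ^ N - Polynomial.X ∣ evalX₀ 1 f) : f ∈ idealXN R N := by
  obtain ⟨u, hu⟩ := h₀
  obtain ⟨w, hw⟩ := h₁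
  have hinterp : (1 - X 0) * ofX₁ (evalX₀ 0 f) + X 0 * ofX₁ (evalX₀ 1 f) =
      -ofX₁ u * ((X 0 - 1) * (X 1 - 1)) + X 0 * ofX₁ w * (X 1 ^ N - X 1) := by
    simp only [hu, hw, map_mul, map_sub, map_pow, map_one, ofX₁_X]
    ring
  have hsub : Ideal.span {X 0 ^ 2 - X 0} ≤ idealXN R N :=
    Ideal.span_mono (Set.singleton_subset_iff.2 (by simp))
  have hrem := sub_interpolate_mem_span f
  rw [hinterp] at hrem
  have hmem := add_mem (hsub hrem) <| add_mem
    (Ideal.mul_mem_left _ (-ofX₁ u) (Ideal.subset_span (a := (X 0 - 1) * (X 1 - 1)) (by simp)))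
    (Ideal.mul_mem_left _ (X 0 * ofX₁ w) (Ideal.subset_span (a := X 1 ^ N - X 1) (by simp)))
  rwa [sub_add_cancel] at hmem

end TwoVariables

theorem idealXN_le_ker_eval {F : Type} [Field F] [Fintype F] [DecidableEq F] {N : ℕ} {P : F × F}
    (hP : P ∈ XNset F N) : idealXN F N ≤ RingHom.ker (eval ![P.1, P.2]) := by
  rw [idealXN, Ideal.span_le]
  simp only [XNset, Finset.mem_insert, Finset.mem_image, Finset.mem_filter, Finset.mem_univ,
    true_and] at hP
  rcases hP with rfl | ⟨z, hz, rfl⟩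
  · simp [Set.insert_subset_iff]
  · simp [Set.insert_subset_iff, hz]

theorem vanishing_ideal_XN_general (q s N : ℕ)
    (F : Type) [Field F] [Fintype F] [DecidableEq F]
    (hF : Fintype.card F = q ^ s) (hN : 1 < N) (hdvd : (N - 1) ∣ (q ^ s - 1))
    (f : MvPolynomial (Fin 2) F) :
    (∀ P ∈ XNset F N, MvPolynomial.eval ![P.1, P.2] f = 0) ↔
      f ∈ Ideal.span
        ({(X 0) ^ 2 - X 0, (X 1) ^ N - X 1, (X 0 - 1) * (X 1 - 1)} :
          Set (MvPolynomial (Fin 2) F)) := by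
  rw [← hF] at hdvd
  refine ⟨fun hvan => mem_idealXN_of_dvd ?_ ?_, fun hf P hP => idealXN_le_ker_eval hP hf⟩
  · rw [Polynomial.dvd_iff_isRoot, Polynomial.IsRoot, eval_evalX₀]
    exact hvan (0, 1) (by simp [XNset])
  · refine FiniteField.dvd_of_dvd_X_pow_card_sub_X ?_ (FiniteField.X_pow_card_sub_X_ne_zero F hN)
      fun z hz => ?_
    · exact Polynomial.X_pow_sub_X_dvd_X_pow_sub_X (by omega) hdvd Fintype.card_pos
    · rw [Polynomial.IsRoot, eval_evalX₀]
      simp only [Polynomial.IsRoot, Polynomial.eval_sub, Polynomial.eval_pow, Polynomial.eval_X,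
        sub_eq_zero] at hz
      exact hvan (1, z) (by simp [XNset, hz])

/-- The vanishing ideal of `X_N` is generated by
`x₀² - x₀`, `x₁^N - x₁` and `(x₀ - 1)(x₁ - 1)`. -/
theorem vanishing_ideal_XN (q s N : ℕ) (hq : 1 < q) (hs : 0 < s)
    (F : Type) [Field F] [Fintype F] [DecidableEq F]
    (hF : Fintype.card F = q ^ s) (hN : 1 < N) (hdvd : (N - 1) ∣ (q ^ s - 1))
    (f : MvPolynomial (Fin 2) F) :
    (∀ P ∈ XNset F N, MvPolynomial.eval ![P.1, P.2] f = 0) ↔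
      f ∈ Ideal.span
        ({(X 0) ^ 2 - X 0, (X 1) ^ N - X 1, (X 0 - 1) * (X 1 - 1)} :
          Set (MvPolynomial (Fin 2) F)) :=
  vanishing_ideal_XN_general q s N F hF hN hdvd f
end

section
/- Let $\mathbb{F}_{q^s}$ be a finite field, $N > 1$ with $N-1 \mid q^s-1$. In the quotient ring $\mathbb{F}_{q^s}[x_0,x_1]/I(X_N)$, for every $d$ with $1 \leq d \leq N$, the classes of the monomials $x_1^d, x_0, x_0 x_1, x_0 x_1^2, \dots, x_0 x_1^{d-1}$ are linearly independent over $\mathbb{F}_{q^s}$. Moreover, for $d = N$ this set of $N+1$ classes is a basis of $\mathbb{F}_{q^s}[x_0,x_1]/I(X_N)$. -/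
/-- The family of evaluation vectors of the monomials `x₁^d, x₀, x₀x₁, …, x₀x₁^{d-1}`
over the points of `X_N`. -/
def monFam (F : Type) [Field F] [Fintype F] [DecidableEq F] (N d : ℕ) :
    Fin (d + 1) → (↥(XNset F N) → F) :=
  fun i P => if (i : ℕ) = 0 then (P : F × F).2 ^ d
    else (P : F × F).1 * (P : F × F).2 ^ ((i : ℕ) - 1)

open Finset

namespace FiniteField

variable {K : Type*} [Field K] [Fintype K]

theorem exists_isPrimitiveRoot_of_dvd_card_sub_one {n : ℕ} (hn : n ∣ Fintype.card K - 1) :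
    ∃ ζ : K, IsPrimitiveRoot ζ n := by
  classical
  obtain ⟨g, hg⟩ := IsCyclic.exists_ofOrder_eq_natCard (α := Kˣ)
  rw [Nat.card_eq_fintype_card, Fintype.card_units] at hg
  refine ⟨((g ^ (orderOf g / n) : Kˣ) : K), IsPrimitiveRoot.coe_units_iff.mpr ?_⟩
  have hζ := IsPrimitiveRoot.orderOf (g ^ (orderOf g / n))
  rwa [orderOf_pow_orderOf_div (orderOf_pos g).ne' (hg ▸ hn)] at hζ

theorem filter_pow_succ_eq_self [DecidableEq K] {n : ℕ} (hn : 0 < n) :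
    ({z : K | z ^ (n + 1) = z} : Finset K) = insert 0 (Polynomial.nthRootsFinset n (1 : K)) := by
  ext z
  rw [mem_filter, mem_insert, Polynomial.mem_nthRootsFinset hn, pow_succ, mul_left_eq_self₀]
  simp only [mem_univ, true_and, or_comm]

theorem card_filter_pow_eq_self [DecidableEq K] {N : ℕ} (hN : 1 < N)
    (hdvd : N - 1 ∣ Fintype.card K - 1) : #{z : K | z ^ N = z} = N := by
  obtain ⟨n, rfl⟩ : ∃ n, N = n + 1 := ⟨N - 1, by omega⟩
  obtain ⟨ζ, hζ⟩ := exists_isPrimitiveRoot_of_dvd_card_sub_one hdvd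
  have hn : 0 < n := by omega
  rw [Nat.add_sub_cancel] at hζ
  rw [filter_pow_succ_eq_self hn, card_insert_of_notMem, hζ.card_nthRootsFinset]
  simp [Polynomial.mem_nthRootsFinset hn, hn.ne']

end FiniteField

theorem linearIndependent_pow_of_le_card {K : Type*} [Field K] (s : Finset K) {n : ℕ}
    (hn : n ≤ #s) : LinearIndependent K (fun (i : Fin n) (z : s) => (z : K) ^ (i : ℕ)) := by
  rw [Fintype.linearIndependent_iff]
  intro g hg
  let e : Fin n ↪ s := (Fin.castLEEmb (by simpa using hn)).trans s.equivFin.symm.toEmbedding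
  have hg_eval (j : Fin n) : ∑ i, g i * (e j : K) ^ (i : ℕ) = 0 := by
    simpa using congr_fun hg (e j)
  exact congr_fun (Matrix.eq_zero_of_forall_index_sum_mul_pow_eq_zero
    (Subtype.val_injective.comp e.injective) hg_eval)

namespace XNset

variable {F : Type} [Field F] [Fintype F] [DecidableEq F] {N : ℕ}

theorem zero_one_mem : ((0 : F), (1 : F)) ∈ XNset F N := mem_insert_self _ _

theorem one_mem {z : F} (hz : z ^ N = z) : ((1 : F), z) ∈ XNset F N :=
  mem_insert_of_mem (mem_image_of_mem _ (by simp [hz]))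

theorem card_eq : #(XNset F N) = #{z : F | z ^ N = z} + 1 := by
  rw [XNset, card_insert_of_notMem, card_image_of_injective _ (Prod.mk_right_injective 1)]
  simp

end XNset

def monFamTail (F : Type) [Field F] [Fintype F] [DecidableEq F] (N d : ℕ) :
    Fin d → XNset F N → F :=
  fun j P => (P : F × F).1 * (P : F × F).2 ^ (j : ℕ)

section

variable {F : Type} [Field F] [Fintype F] [DecidableEq F] {N d : ℕ}

theorem monFam_eq_cons : monFam F N d =
    Fin.cons (fun P : XNset F N => (P : F × F).2 ^ d) (monFamTail F N d) := by
  ext i P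
  cases i using Fin.cases <;> simp [monFam, monFamTail]

theorem linearIndependent_monFamTail (hd : d ≤ #{z : F | z ^ N = z}) :
    LinearIndependent F (monFamTail F N d) := by
  let ι (z : ({z : F | z ^ N = z} : Finset F)) : XNset F N :=
    ⟨((1 : F), z), XNset.one_mem (mem_filter.mp z.2).2⟩
  refine LinearIndependent.of_comp (LinearMap.funLeft F F ι) ?_
  convert linearIndependent_pow_of_le_card _ hd using 1
  ext j z
  simp [ι, LinearMap.funLeft, monFamTail]

theorem pow_notMem_span_monFamTail :
    (fun P : XNset F N => (P : F × F).2 ^ d) ∉ Submodule.span F (Set.range (monFamTail F N d)) := by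
  let P₀ : XNset F N := ⟨((0 : F), (1 : F)), XNset.zero_one_mem⟩
  have hspan : Submodule.span F (Set.range (monFamTail F N d)) ≤
      LinearMap.ker (LinearMap.proj P₀) := by
    rw [Submodule.span_le]
    rintro _ ⟨j, rfl⟩
    simp [P₀, monFamTail]
  intro h
  simpa [P₀] using hspan h

end

theorem monomials_linearIndependent_XN_general (q s N : ℕ)
    (F : Type) [Field F] [Fintype F] [DecidableEq F]
    (hF : Fintype.card F = q ^ s) (hN : 1 < N) (hdvd : (N - 1) ∣ (q ^ s - 1))
    (d : ℕ) (hdN : d ≤ N) :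
    LinearIndependent F (monFam F N d) ∧
      (d = N → Submodule.span F (Set.range (monFam F N d)) = ⊤) := by
  have hroots : #{z : F | z ^ N = z} = N := FiniteField.card_filter_pow_eq_self hN (hF ▸ hdvd)
  have hli : LinearIndependent F (monFam F N d) := by
    rw [monFam_eq_cons]
    exact (linearIndependent_monFamTail (hdN.trans_eq hroots.symm)).finCons
      pow_notMem_span_monFamTail
  refine ⟨hli, fun hd => hli.span_eq_top_of_card_eq_finrank ?_⟩
  rw [Fintype.card_fin, Module.finrank_pi, Fintype.card_coe, XNset.card_eq, hroots, hd]

/-- For `1 ≤ d ≤ N`, the evaluation vectors of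
`x₁^d, x₀, x₀x₁, …, x₀x₁^{d-1}` at the points of `X_N` are linearly independent;
for `d = N` they form a basis of the space of functions on `X_N`
(equivalently, of `𝔽_{q^s}[x₀,x₁]/I(X_N)`). -/
theorem monomials_linearIndependent_XN (q s N : ℕ) (hq : 1 < q) (hs : 0 < s)
    (F : Type) [Field F] [Fintype F] [DecidableEq F]
    (hF : Fintype.card F = q ^ s) (hN : 1 < N) (hdvd : (N - 1) ∣ (q ^ s - 1))
    (d : ℕ) (hd1 : 1 ≤ d) (hdN : d ≤ N) :
    LinearIndependent F (monFam F N d) ∧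
      (d = N → Submodule.span F (Set.range (monFam F N d)) = ⊤) :=
  monomials_linearIndependent_XN_general q s N F hF hN hdvd d hdN
end

section
/- Let $C \subseteq \mathbb{F}_{q^s}^n$ be a linear code over $\mathbb{F}_{q^s}$ and let $\mathrm{Tr}: \mathbb{F}_{q^s} \to \mathbb{F}_q$, $x \mapsto x + x^q + \cdots + x^{q^{s-1}}$, be the field trace, applied componentwise to vectors. Then the dual (over $\mathbb{F}_q$) of the subfield subcode equals the trace of the dual: $(C \cap \mathbb{F}_q^n)^\perp = \mathrm{Tr}(C^\perp)$, where the duals are taken with respect to the standard bilinear forms over $\mathbb{F}_q$ and $\mathbb{F}_{q^s}$ respectively. -/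
/-!
The trace `Tr` is a nonzero `𝔽_q`-linear map `𝔽_{q^s} → 𝔽_q`. For `v ∈ C ∩ 𝔽_q^n` and
`c ∈ C^⊥` we have `v ⬝ Tr(c) = Tr(v ⬝ c) = 0`, so `Tr(C^⊥) ⊆ (C ∩ 𝔽_q^n)^⊥`. Conversely, if
`u ∈ 𝔽_q^n` is orthogonal to `Tr(C^⊥)`, then for `c ∈ C^⊥` and every `λ` we get
`Tr(λ (u ⬝ c)) = u ⬝ Tr(λ c) = 0`, hence `u ⬝ c = 0` because `Tr ≠ 0`; so `u ∈ C^⊥⊥ = C`.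
Since the dot product on `𝔽_q^n` is nondegenerate, taking orthogonals gives the equality.
-/

open Finset Matrix Polynomial

section DotForm
variable (R ι : Type*) [CommRing R] [Fintype ι]

abbrev dotForm : LinearMap.BilinForm R (ι → R) :=
  dotProductBilin R R

@[simp]
lemma dotForm_apply (v w : ι → R) : dotForm R ι v w = v ⬝ᵥ w := rfl

lemma dotForm_nondegenerate : (dotForm R ι).Nondegenerate :=
  ⟨fun v hv => dotProduct_eq_zero v hv,
    fun w hw => dotProduct_eq_zero w fun v => by simpa [dotProduct_comm] using hw v⟩

lemma dotForm_isRefl : (dotForm R ι).IsRefl :=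
  fun v w h => by simpa [dotProduct_comm] using h

end DotForm

lemma dotProduct_comp_eq_map_dotProduct {K L ι : Type*} [CommSemiring K] [Semiring L]
    [Algebra K L] [Fintype ι] (T : L →ₗ[K] K) (v : ι → K) (c : ι → L) :
    v ⬝ᵥ (T ∘ c) = T ((algebraMap K L ∘ v) ⬝ᵥ c) := by
  simp [dotProduct, map_sum, ← smul_eq_mul]

lemma LinearMap.eq_zero_of_forall_map_mul_eq_zero {K L M : Type*} [CommSemiring K]
    [DivisionRing L] [Algebra K L] [AddCommMonoid M] [Module K M] {T : L →ₗ[K] M} (hT : T ≠ 0)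
    {t : L} (h : ∀ a, T (a * t) = 0) : t = 0 := by
  by_contra ht
  obtain ⟨x, hx⟩ : ∃ x, T x ≠ 0 := by simpa [LinearMap.ext_iff] using hT
  exact hx (by simpa [ht] using h (x * t⁻¹))

section Delsarte
variable {K L ι : Type*} [Field K] [Field L] [Algebra K L]

variable (K) in
def subfieldSubcode (C : Submodule L (ι → L)) : Submodule K (ι → K) :=
  (C.restrictScalars K).comap (LinearMap.compLeft (Algebra.linearMap K L) ι)

def traceCode (T : L →ₗ[K] K) (D : Submodule L (ι → L)) : Submodule K (ι → K) :=
  (D.restrictScalars K).map (LinearMap.compLeft T ι)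

variable [Fintype ι]

lemma traceCode_orthogonal_le_orthogonal_subfieldSubcode (T : L →ₗ[K] K)
    (C : Submodule L (ι → L)) :
    traceCode T ((dotForm L ι).orthogonal C) ≤ (dotForm K ι).orthogonal (subfieldSubcode K C) := by
  rintro _ ⟨c, hc, rfl⟩ v hv
  change v ⬝ᵥ (T ∘ c) = 0
  rw [dotProduct_comp_eq_map_dotProduct, show (algebraMap K L ∘ v) ⬝ᵥ c = 0 from hc _ hv,
    map_zero]

lemma orthogonal_traceCode_orthogonal_le_subfieldSubcode {T : L →ₗ[K] K} (hT : T ≠ 0)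
    (C : Submodule L (ι → L)) :
    (dotForm K ι).orthogonal (traceCode T ((dotForm L ι).orthogonal C)) ≤
      subfieldSubcode K C := by
  intro u hu
  have hperp : algebraMap K L ∘ u ∈ (dotForm L ι).orthogonal ((dotForm L ι).orthogonal C) := by
    intro c hc
    change c ⬝ᵥ (algebraMap K L ∘ u) = 0
    refine LinearMap.eq_zero_of_forall_map_mul_eq_zero hT fun a => ?_
    have : (T ∘ (a • c)) ⬝ᵥ u = 0 := hu _ ⟨a • c, Submodule.smul_mem _ a hc, rfl⟩
    rwa [dotProduct_comm, dotProduct_comp_eq_map_dotProduct, dotProduct_smul,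
      dotProduct_comm] at this
  rwa [LinearMap.BilinForm.orthogonal_orthogonal (dotForm_nondegenerate L ι)
    (dotForm_isRefl L ι)] at hperp

theorem orthogonal_subfieldSubcode_eq_traceCode {T : L →ₗ[K] K} (hT : T ≠ 0)
    (C : Submodule L (ι → L)) :
    (dotForm K ι).orthogonal (subfieldSubcode K C) = traceCode T ((dotForm L ι).orthogonal C) := by
  refine le_antisymm ?_ (traceCode_orthogonal_le_orthogonal_subfieldSubcode T C)
  calc (dotForm K ι).orthogonal (subfieldSubcode K C)
      ≤ (dotForm K ι).orthogonal
          ((dotForm K ι).orthogonal (traceCode T ((dotForm L ι).orthogonal C))) :=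
        LinearMap.BilinForm.orthogonal_le (orthogonal_traceCode_orthogonal_le_subfieldSubcode hT C)
    _ = _ := LinearMap.BilinForm.orthogonal_orthogonal (dotForm_nondegenerate K ι)
        (dotForm_isRefl K ι) _

end Delsarte

section Coordinates
variable {L ι : Type*} [Field L] (K : Subfield L)

lemma image_orthogonal_subfieldSubcode [Fintype ι] (C : Submodule L (ι → L)) :
    (fun u : ι → K => ((↑) ∘ u : ι → L)) '' (dotForm K ι).orthogonal (subfieldSubcode K C) =
      {w | (∀ i, w i ∈ K) ∧ ∀ v, (v ∈ C ∧ ∀ i, v i ∈ K) → v ⬝ᵥ w = 0} := by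
  ext w
  constructor
  · rintro ⟨u, hu, rfl⟩
    refine ⟨fun i => (u i).2, fun v ⟨hvC, hvK⟩ => ?_⟩
    have := congrArg K.subtype (hu (fun i => ⟨v i, hvK i⟩) hvC)
    rwa [dotForm_apply, RingHom.map_dotProduct, map_zero] at this
  · rintro ⟨hwK, hw⟩
    refine ⟨fun i => ⟨w i, hwK i⟩, fun v hv => K.subtype_injective ?_, rfl⟩
    rw [dotForm_apply, RingHom.map_dotProduct, map_zero]
    exact hw _ ⟨hv, fun i => (v i).2⟩

lemma image_traceCode (T : L →ₗ[K] K) (D : Submodule L (ι → L)) :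
    (fun u : ι → K => ((↑) ∘ u : ι → L)) '' traceCode T D =
      {w : ι → L | ∃ c ∈ D, ∀ i, w i = T (c i)} := by
  ext w
  constructor
  · rintro ⟨_, ⟨c, hc, rfl⟩, rfl⟩
    exact ⟨c, hc, fun i => rfl⟩
  · rintro ⟨c, hc, hw⟩
    exact ⟨_, ⟨c, hc, rfl⟩, funext fun i => (hw i).symm⟩

end Coordinates

namespace RingHom
variable {L : Type*} [Field L]

lemma apply_sum_range_pow_apply {σ : L →+* L} {s : ℕ} (hσ : σ ^ s = 1) (x : L) :
    σ (∑ j ∈ Finset.range s, (σ ^ j) x) = ∑ j ∈ Finset.range s, (σ ^ j) x := by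
  have h := sum_range_succ' (fun j => (σ ^ j) x) s
  rw [sum_range_succ, hσ, pow_zero] at h
  have hstep (j : ℕ) : σ ((σ ^ j) x) = (σ ^ (j + 1)) x := by
    rw [pow_succ', coe_mul, Function.comp_apply]
  simp only [map_sum, hstep]
  exact (add_right_cancel h).symm

/-- When `σ` generates a cyclic Galois group of order `s`, this is the field trace onto the
fixed field. -/
def orbitSum (σ : L →+* L) {s : ℕ} (hσ : σ ^ s = 1) :
    L →ₗ[σ.eqLocusField (RingHom.id L)] σ.eqLocusField (RingHom.id L) where
  toFun x := ⟨∑ j ∈ Finset.range s, (σ ^ j) x, apply_sum_range_pow_apply hσ x⟩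
  map_add' x y := by ext; simp [sum_add_distrib]
  map_smul' a x := by
    ext
    simp only [Subfield.smul_def, smul_eq_mul, map_mul, Subfield.coe_mul, mul_sum,
      RingHom.id_apply]
    refine sum_congr rfl fun j _ => ?_
    rw [coe_pow, Function.iterate_fixed a.2]

@[simp]
lemma coe_orbitSum_apply (σ : L →+* L) {s : ℕ} (hσ : σ ^ s = 1) (x : L) :
    (σ.orbitSum hσ x : L) = ∑ j ∈ Finset.range s, (σ ^ j) x := rfl

lemma pow_apply_eq_pow_pow {σ : L →+* L} {q : ℕ} (hσ : ∀ x, σ x = x ^ q) (j : ℕ) (x : L) :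
    (σ ^ j) x = x ^ q ^ j := by
  induction j with
  | zero => simp
  | succ j ih => rw [pow_succ', coe_mul, Function.comp_apply, ih, hσ, ← pow_mul, pow_succ]

end RingHom

/-- `∑_{j<s} X^(q^j)` has `X`-coefficient `1` and degree `q^(s-1) < |L|`. -/
lemma exists_sum_range_pow_pow_ne_zero {L : Type*} [Field L] [Fintype L] {q s : ℕ} (hq : 1 < q)
    (hs : 0 < s) (hL : Fintype.card L = q ^ s) : ∃ x : L, ∑ j ∈ Finset.range s, x ^ q ^ j ≠ 0 := by
  set P : L[X] := ∑ j ∈ Finset.range s, X ^ q ^ j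
  have hP : P.coeff 1 = 1 := by
    rw [finsetSum_coeff, sum_eq_single_of_mem 0 (mem_range.mpr hs)]
    · simp
    · intro j _ hj
      simp [coeff_X_pow, (Nat.one_lt_pow hj hq).ne]
  have hdeg : P.natDegree < Fintype.card L := by
    refine (natDegree_sum_le_of_forall_le _ _ fun j hj => (natDegree_X_pow_le _).trans ?_).trans_lt
      (hL ▸ Nat.pow_lt_pow_right hq (Nat.sub_one_lt hs.ne'))
    exact Nat.pow_le_pow_right (by omega) (by have := mem_range.mp hj; omega)
  obtain ⟨x, hx⟩ := P.exists_eval_ne_zero_of_natDegree_lt_card (fun h => by simp [h] at hP)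
    (by simpa using hdeg)
  exact ⟨x, by simpa [P, eval_finsetSum] using hx⟩

/-- **Delsarte's theorem.** Over `L = 𝔽_{q^s}` with subfield
`𝔽_q = {x | x^q = x}`, the dual (over `𝔽_q`) of the subfield subcode of a linear code
`C` equals the componentwise trace of the dual of `C`. -/
theorem delsarte (p m q s n : ℕ) (hp : p.Prime) (hq : q = p ^ m) (hm : 0 < m) (hs : 0 < s)
    (L : Type) [Field L] [Fintype L] (hchar : ringChar L = p)
    (hL : Fintype.card L = q ^ s) (C : Submodule L (Fin n → L)) :
    {w : Fin n → L | (∀ i, w i ^ q = w i) ∧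
        ∀ v : Fin n → L, (v ∈ C ∧ ∀ i, v i ^ q = v i) → ∑ i, v i * w i = 0} =
      {w : Fin n → L | ∃ c : Fin n → L, (∀ v ∈ C, ∑ i, v i * c i = 0) ∧
        ∀ i, w i = ∑ j ∈ Finset.range s, c i ^ q ^ j} := by
  have : Fact p.Prime := ⟨hp⟩
  have : CharP L p := hchar ▸ ringChar.charP L
  obtain ⟨σ, hσ⟩ : ∃ σ : L →+* L, ∀ x, σ x = x ^ q :=
    ⟨iterateFrobenius L p m, fun x => by rw [iterateFrobenius_def, hq]⟩
  have hσs : σ ^ s = 1 := RingHom.ext fun x => by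
    rw [RingHom.pow_apply_eq_pow_pow hσ, ← hL, FiniteField.pow_card, RingHom.one_def,
      RingHom.id_apply]
  have hT : σ.orbitSum hσs ≠ 0 := by
    obtain ⟨x, hx⟩ :=
      exists_sum_range_pow_pow_ne_zero (hq ▸ Nat.one_lt_pow hm.ne' hp.one_lt) hs hL
    refine fun h => hx ?_
    simpa [RingHom.pow_apply_eq_pow_pow hσ] using congrArg Subtype.val (LinearMap.congr_fun h x)
  have key := congrArg (fun D : Submodule _ _ =>
    (fun u : Fin n → σ.eqLocusField (RingHom.id L) => ((↑) ∘ u : Fin n → L)) '' D)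
    (orthogonal_subfieldSubcode_eq_traceCode hT C)
  rw [image_orthogonal_subfieldSubcode, image_traceCode] at key
  simpa [RingHom.mem_eqLocusField, hσ, RingHom.pow_apply_eq_pow_pow hσ, dotProduct] using key
end

section
/- Let $\mathbb{F}_{q^s}$ be a finite field of characteristic $p$, and let $N > 1$ with $N - 1 \mid q^s - 1$ and $p \mid N$. For $0 \leq d \leq N-1$, let $\mathrm{PRS}(N, \Delta_d)$ be the linear code over $\mathbb{F}_{q^s}$ of length $N+1$ spanned by the evaluation vectors of the monomials $x_0^{d-i} x_1^i$, $0 \leq i \leq d$, at the points of $X_N = \{(1,z) \mid z^N = z\} \cup \{(0,1)\}$. Then $\mathrm{PRS}(N, \Delta_d)^\perp = \mathrm{PRS}(N, \Delta_{N-1-d})$, where the dual is with respect to the standard dot product on $\mathbb{F}_{q^s}^{N+1}$. -/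
/-- The projective Reed-Solomon code `PRS(N, Δ_d)`: the span of the evaluation vectors of
the monomials `x₀^{d-i} x₁^i`, `0 ≤ i ≤ d`, at the points of `X_N`. -/
def PRS (F : Type) [Field F] [Fintype F] [DecidableEq F] (N d : ℕ) :
    Submodule F (↥(XNset F N) → F) :=
  Submodule.span F (Set.range (fun i : Fin (d + 1) => fun P : ↥(XNset F N) =>
    (P : F × F).1 ^ (d - (i : ℕ)) * (P : F × F).2 ^ (i : ℕ)))

/-!
The heart of the proof is that every monomial `x₀^(N-1-a) x₁^a` of degree `N - 1` sums to zero
over `X_N`. The affine points are `(1, 0)` and `(1, z)` with `z` an `(N-1)`-th root of unity, and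
the power sum of `z ^ a` over those roots is `N - 1` or `0` according as `N - 1 ∣ a` or not; the
points `(1, 0)` and `(0, 1)` contribute `1` exactly for `a = 0` and `a = N - 1` respectively. So
the total is `N = 0` or `0`, and `PRS(N, Δ_d)` is orthogonal to `PRS(N, Δ_{N-1-d})`. The monomials
of degree `e < N` are linearly independent already on the `N` affine points, so these codes have
dimensions `d + 1` and `N - d`, which add up to `N + 1 = |X_N|`; as the dot product is
nondegenerate, the second code is the whole dual of the first.
-/

open Polynomial Module

theorem FiniteField.exists_isPrimitiveRoot_of_dvd_card_sub_one_s12 {K : Type*} [Field K] [Fintype K]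
    {n : ℕ} (hn : n ∣ Fintype.card K - 1) : ∃ ζ : K, IsPrimitiveRoot ζ n := by
  obtain ⟨g, hg⟩ := IsCyclic.exists_ofOrder_eq_natCard (α := Kˣ)
  rw [Nat.card_units, Nat.card_eq_fintype_card] at hg
  have hgK : IsPrimitiveRoot (g : K) (Fintype.card K - 1) :=
    IsPrimitiveRoot.coe_units_iff.mpr (hg ▸ IsPrimitiveRoot.orderOf g)
  obtain ⟨k, hk⟩ := hn
  exact ⟨_, hgK.pow (by have := Fintype.one_lt_card (α := K); omega) (hk.trans (mul_comm n k))⟩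

theorem IsPrimitiveRoot.sum_nthRootsFinset_pow {R : Type*} [CommRing R] [IsDomain R] {ζ : R}
    {n : ℕ} (hζ : IsPrimitiveRoot ζ n) (hn : 0 < n) (a : ℕ) :
    ∑ z ∈ nthRootsFinset n (1 : R), z ^ a = if n ∣ a then (n : R) else 0 := by
  have hmem (z : R) : z ∈ nthRootsFinset n (1 : R) ↔ z ^ n = 1 :=
    Polynomial.mem_nthRootsFinset hn 1
  split_ifs with ha
  · obtain ⟨k, rfl⟩ := ha
    rw [Finset.sum_congr rfl fun z hz => by rw [pow_mul, (hmem z).1 hz, one_pow],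
      Finset.sum_const, hζ.card_nthRootsFinset, nsmul_one]
  · -- multiplication by `ζ` permutes the `n`-th roots of unity, with inverse `ζ ^ (n - 1)`
    have hinv (z : R) : ζ ^ (n - 1) * (ζ * z) = z := by
      rw [← mul_assoc, ← pow_succ, Nat.sub_add_cancel hn, hζ.pow_eq_one, one_mul]
    have hshift : ∑ z ∈ nthRootsFinset n (1 : R), (ζ * z) ^ a
        = ∑ z ∈ nthRootsFinset n (1 : R), z ^ a := by
      refine Finset.sum_nbij' (ζ * ·) (ζ ^ (n - 1) * ·) ?_ ?_ ?_ ?_ (fun _ _ => rfl) <;>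
        intro z hz <;> simp only [hmem] at hz ⊢
      · rw [mul_pow, hz, hζ.pow_eq_one, one_mul]
      · rw [mul_pow, ← pow_mul, hz, mul_one, pow_mul', hζ.pow_eq_one, one_pow]
      · exact hinv z
      · rw [mul_left_comm, hinv]
    have hfixed : ζ ^ a * ∑ z ∈ nthRootsFinset n (1 : R), z ^ a
        = ∑ z ∈ nthRootsFinset n (1 : R), z ^ a := by
      simp only [Finset.mul_sum, ← mul_pow, hshift]
    have hζa : ζ ^ a - 1 ≠ 0 := sub_ne_zero.mpr fun h => ha ((hζ.pow_eq_one_iff_dvd a).1 h)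
    refine (mul_eq_zero.1 ?_).resolve_left hζa
    rw [sub_mul, hfixed, one_mul, sub_self]

theorem zero_notMem_nthRootsFinset {R : Type*} [CommRing R] [IsDomain R] {n : ℕ} (hn : 0 < n) :
    (0 : R) ∉ nthRootsFinset n (1 : R) := by
  simp [mem_nthRootsFinset hn, zero_pow hn.ne']

theorem linearIndependent_pow_of_injective {R ι : Type*} [CommRing R] [IsDomain R] [Fintype ι]
    {x : ι → R} (hx : Function.Injective x) {n : ℕ} (hn : n ≤ Fintype.card ι) :
    LinearIndependent R (fun i : Fin n => fun j : ι => x j ^ (i : ℕ)) := by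
  rw [Fintype.linearIndependent_iff]
  intro g hg i
  let f : R[X] := ∑ k, C (g k) * X ^ (k : ℕ)
  have hf : f = 0 := by
    refine eq_zero_of_natDegree_lt_card_of_eval_eq_zero f hx (fun j => ?_) ?_
    · simpa [f, eval_finsetSum] using congrFun hg j
    · refine lt_of_le_of_lt (natDegree_sum_le_of_forall_le _ _ (n := n - 1) fun k _ => ?_) ?_
      · exact (natDegree_C_mul_X_pow_le _ _).trans (by omega)
      · have := i.pos; omega
  simpa [f, finsetSum_coeff, coeff_C_mul_X_pow, Fin.val_inj] using congrArg (coeff · i) hf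

section DotProduct

variable {ι K : Type*} [Fintype ι]

theorem dotProduct_eq_zero_of_mem_span [CommSemiring K] {α β : Type*}
    {u : α → ι → K} {v : β → ι → K}
    (h : ∀ a b, u a ⬝ᵥ v b = 0) {x y : ι → K} (hx : x ∈ Submodule.span K (Set.range u))
    (hy : y ∈ Submodule.span K (Set.range v)) : x ⬝ᵥ y = 0 := by
  induction hx using Submodule.span_induction with
  | mem x hx =>
    obtain ⟨a, rfl⟩ := hx
    induction hy using Submodule.span_induction with
    | mem y hy => obtain ⟨b, rfl⟩ := hy; exact h a b
    | zero => exact dotProduct_zero _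
    | add y z _ _ hy hz => rw [dotProduct_add, hy, hz, add_zero]
    | smul c y _ hy => rw [dotProduct_smul, hy, smul_zero]
  | zero => exact zero_dotProduct _
  | add x z _ _ hx hz => rw [add_dotProduct, hx, hz, add_zero]
  | smul c x _ hx => rw [smul_dotProduct, hx, smul_zero]

theorem setOf_dotProduct_eq_zero_eq [Field K] {C D : Submodule K (ι → K)}
    (hCD : ∀ v ∈ C, ∀ w ∈ D, v ⬝ᵥ w = 0)
    (hdim : finrank K C + finrank K D = Fintype.card ι) :
    {w | ∀ v ∈ C, v ⬝ᵥ w = 0} = D := by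
  let B : LinearMap.BilinForm K (ι → K) := dotProductBilin K K
  have hker : LinearMap.ker B = ⊥ := LinearMap.ker_eq_bot'.2 fun v hv =>
    dotProduct_eq_zero_iff.1 fun w => LinearMap.congr_fun hv w
  have horth : finrank K C + finrank K (B.orthogonal C) = Fintype.card ι := by
    have := LinearMap.BilinForm.finrank_add_finrank_orthogonal' (B := B) C
    rwa [hker, inf_bot_eq, finrank_bot, add_zero, finrank_fintype_fun_eq_card] at this
  have hle : D ≤ B.orthogonal C := fun w hw =>
    LinearMap.BilinForm.mem_orthogonal_iff.2 fun v hv => hCD v hv w hw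
  rw [Submodule.eq_of_le_of_finrank_le hle (by omega)]
  rfl

end DotProduct

section XNset

variable {F : Type} [Field F] [Fintype F] [DecidableEq F] {N : ℕ}

theorem filter_pow_eq_self_eq_insert_nthRootsFinset (hN : 1 < N) :
    Finset.univ.filter (fun z : F => z ^ N = z) = insert 0 (nthRootsFinset (N - 1) (1 : F)) := by
  ext z
  simp only [Finset.mem_filter, Finset.mem_univ, true_and, Finset.mem_insert,
    mem_nthRootsFinset (by omega : 0 < N - 1)]
  rcases eq_or_ne z 0 with rfl | hz
  · simp [zero_pow (by omega : N ≠ 0)]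
  · rw [← Nat.sub_add_cancel hN.le, pow_succ, Nat.add_sub_cancel, mul_eq_right₀ hz]
    simp [hz]

theorem sum_XNset {M : Type*} [AddCommMonoid M] (f : F × F → M) :
    ∑ P ∈ XNset F N, f P
      = f (0, 1) + ∑ z ∈ Finset.univ.filter (fun z : F => z ^ N = z), f (1, z) := by
  rw [XNset, Finset.sum_insert (by simp), Finset.sum_image (by simp)]

theorem card_filter_pow_eq_self {ζ : F} (hζ : IsPrimitiveRoot ζ (N - 1)) (hN : 1 < N) :
    (Finset.univ.filter (fun z : F => z ^ N = z)).card = N := by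
  rw [filter_pow_eq_self_eq_insert_nthRootsFinset hN, Finset.card_insert_of_notMem,
    hζ.card_nthRootsFinset, Nat.sub_add_cancel hN.le]
  exact zero_notMem_nthRootsFinset (by omega)

theorem card_XNset {ζ : F} (hζ : IsPrimitiveRoot ζ (N - 1)) (hN : 1 < N) :
    (XNset F N).card = N + 1 := by
  rw [XNset, Finset.card_insert_of_notMem (by simp),
    Finset.card_image_of_injective _ (Prod.mk_right_injective 1), card_filter_pow_eq_self hζ hN]

theorem sum_XNset_monomial_eq_zero {ζ : F} (hζ : IsPrimitiveRoot ζ (N - 1)) (hN : 1 < N)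
    (hN0 : (N : F) = 0) {a : ℕ} (ha : a ≤ N - 1) :
    ∑ P ∈ XNset F N, P.1 ^ (N - 1 - a) * P.2 ^ a = 0 := by
  have hN1 : ((N - 1 : ℕ) : F) = -1 := by
    rw [Nat.cast_sub hN.le, hN0, Nat.cast_one, zero_sub]
  rw [sum_XNset, filter_pow_eq_self_eq_insert_nthRootsFinset hN,
    Finset.sum_insert (zero_notMem_nthRootsFinset (by omega))]
  simp only [one_pow, one_mul, hζ.sum_nthRootsFinset_pow (by omega), hN1, zero_pow_eq]
  obtain rfl | ha0 := Nat.eq_zero_or_pos a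
  · simp [show N - 1 ≠ 0 by omega]
  obtain rfl | halt := ha.eq_or_lt
  · simp [ha0.ne']
  · simp [Nat.not_dvd_of_pos_of_lt ha0 halt, ha0.ne', show N - 1 - a ≠ 0 by omega]

theorem finrank_PRS {ζ : F} (hζ : IsPrimitiveRoot ζ (N - 1)) (hN : 1 < N) {e : ℕ}
    (he : e ≤ N - 1) : finrank F (PRS F N e) = e + 1 := by
  let S := Finset.univ.filter (fun z : F => z ^ N = z)
  have hmem (z : S) : ((1 : F), (z : F)) ∈ XNset F N :=
    Finset.mem_insert_of_mem (Finset.mem_image_of_mem _ z.2)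
  -- restricting to the affine points `(1, z)` turns the monomials into the powers `z ^ i`
  let restrict := LinearMap.funLeft F F (fun z : S => (⟨(1, z), hmem z⟩ : XNset F N))
  have hpow : (restrict ∘ fun i : Fin (e + 1) => fun P : XNset F N =>
      (P : F × F).1 ^ (e - (i : ℕ)) * (P : F × F).2 ^ (i : ℕ))
      = fun i : Fin (e + 1) => fun z : S => (z : F) ^ (i : ℕ) := by
    ext i z
    simp [restrict, LinearMap.funLeft_apply]
  have hind : LinearIndependent F fun i : Fin (e + 1) => fun z : S => (z : F) ^ (i : ℕ) :=
    linearIndependent_pow_of_injective Subtype.val_injective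
      (by rw [Fintype.card_coe, card_filter_pow_eq_self hζ hN]; omega)
  rw [PRS, finrank_span_eq_card (LinearIndependent.of_comp restrict (hpow ▸ hind)),
    Fintype.card_fin]

theorem PRS_dotProduct_eq_zero {ζ : F} (hζ : IsPrimitiveRoot ζ (N - 1)) (hN : 1 < N)
    (hN0 : (N : F) = 0) {d : ℕ} (hd : d ≤ N - 1) :
    ∀ v ∈ PRS F N d, ∀ w ∈ PRS F N (N - 1 - d), v ⬝ᵥ w = 0 := by
  refine fun v hv w hw => dotProduct_eq_zero_of_mem_span (fun i j => ?_) hv hw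
  have hmul (P : XNset F N) : (P : F × F).1 ^ (d - i) * (P : F × F).2 ^ (i : ℕ) *
      ((P : F × F).1 ^ (N - 1 - d - j) * (P : F × F).2 ^ (j : ℕ))
      = (P : F × F).1 ^ (N - 1 - (i + j)) * (P : F × F).2 ^ (i + j : ℕ) := by
    rw [mul_mul_mul_comm, ← pow_add, ← pow_add]
    congr 2
    omega
  rw [dotProduct, Finset.sum_congr rfl fun P _ => hmul P,
    Finset.sum_coe_sort (XNset F N) fun P => P.1 ^ (N - 1 - (i + j)) * P.2 ^ (i + j : ℕ)]
  exact sum_XNset_monomial_eq_zero hζ hN hN0 (by omega)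

end XNset

theorem PRS_dual_general (p q s N : ℕ)
    (F : Type) [Field F] [Fintype F] [DecidableEq F]
    (hF : Fintype.card F = q ^ s) (hp : ringChar F = p) (hN : 1 < N)
    (hdvd : (N - 1) ∣ (q ^ s - 1)) (hpN : p ∣ N) (d : ℕ) (hd : d ≤ N - 1) :
    {w : ↥(XNset F N) → F | ∀ v ∈ PRS F N d, ∑ P, v P * w P = 0} =
      ↑(PRS F N (N - 1 - d)) := by
  obtain ⟨ζ, hζ⟩ := FiniteField.exists_isPrimitiveRoot_of_dvd_card_sub_one_s12 (hF ▸ hdvd)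
  have hN0 : (N : F) = 0 := (ringChar.spec F N).2 (hp ▸ hpN)
  refine setOf_dotProduct_eq_zero_eq (PRS_dotProduct_eq_zero hζ hN hN0 hd) ?_
  rw [finrank_PRS hζ hN hd, finrank_PRS hζ hN (Nat.sub_le _ _), Fintype.card_coe,
    card_XNset hζ hN]
  omega

/-- If `p ∣ N` then `PRS(N, Δ_d)^⊥ = PRS(N, Δ_{N-1-d})`. -/
theorem PRS_dual (p q s N : ℕ) (hq : 1 < q) (hs : 0 < s)
    (F : Type) [Field F] [Fintype F] [DecidableEq F]
    (hF : Fintype.card F = q ^ s) (hp : ringChar F = p) (hN : 1 < N)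
    (hdvd : (N - 1) ∣ (q ^ s - 1)) (hpN : p ∣ N) (d : ℕ) (hd : d ≤ N - 1) :
    {w : ↥(XNset F N) → F | ∀ v ∈ PRS F N d, ∑ P, v P * w P = 0} =
      ↑(PRS F N (N - 1 - d)) :=
  PRS_dual_general p q s N F hF hp hN hdvd hpN d hd
end

section
/- Let $\mathbb{F}_{q^{2\ell}} \supseteq \mathbb{F}_q$ be finite fields, $\mathrm{Tr}_\ell(x) = \sum_{i=0}^{2\ell-1} x^{q^i}$, and let $X_{\mathrm{Tr}} = \{(1, \alpha) \mid \mathrm{Tr}_\ell(\alpha) = 0\} \cup \{(0,1)\} \subset \mathbb{F}_{q^{2\ell}}^2$. Then the vanishing ideal of $X_{\mathrm{Tr}}$ in $\mathbb{F}_{q^{2\ell}}[x_0, x_1]$ is generated by the four polynomials $x_0^2 - x_0$, $x_1^{q^{2\ell}} - x_1$, $(x_0 - 1)(x_1 - 1)$, and $x_0 \cdot \mathrm{Tr}_\ell(x_1)$. -/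
/-!
Modulo `x₀² - x₀`, every `f` is congruent to `(1 - x₀) f(0, x₁) + x₀ f(1, x₁)`. If `f` vanishes
on `X_Tr`, then `x₁ - 1` divides `f(0, x₁)`, and `Tr_ℓ(x₁)` divides `f(1, x₁)`: in characteristic
`p` one has `Tr_ℓ^q - Tr_ℓ = x^{q^{2ℓ}} - x`, so `Tr_ℓ` divides `x^{|L|} - x` and therefore
splits over `L` with simple roots. Conversely, each generator vanishes on `X_Tr`.
-/

open MvPolynomial

theorem sum_range_pow_pow_pow_char_pow_sub_self {R : Type*} [CommRing R] (p : ℕ) [ExpChar R p]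
    (m n : ℕ) (x : R) :
    (∑ i ∈ Finset.range n, x ^ (p ^ m) ^ i) ^ p ^ m - ∑ i ∈ Finset.range n, x ^ (p ^ m) ^ i =
      x ^ (p ^ m) ^ n - x := by
  have hsucc (i : ℕ) : (x ^ (p ^ m) ^ i) ^ p ^ m = x ^ (p ^ m) ^ (i + 1) := by
    rw [← pow_mul, ← pow_succ]
  rw [sum_pow_char_pow, ← Finset.sum_sub_distrib]
  simp only [hsucc]
  rw [Finset.sum_range_sub (fun i => x ^ (p ^ m) ^ i), pow_zero, pow_one]

namespace Polynomial

theorem sum_range_X_pow_pow_dvd_X_pow_sub_X {R : Type*} [CommRing R] (p : ℕ) [ExpChar R p]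
    (m n : ℕ) : ∑ i ∈ Finset.range n, (X : R[X]) ^ (p ^ m) ^ i ∣ X ^ (p ^ m) ^ n - X := by
  rw [← sum_range_pow_pow_pow_char_pow_sub_self p]
  exact dvd_sub (dvd_pow_self _ (pow_ne_zero m (expChar_pos R p).ne')) dvd_rfl

/-- A divisor of `X ^ |K| - X` splits with simple roots. -/
theorem dvd_of_dvd_X_pow_card_sub_X {K : Type*} [Field K] [Fintype K] {f g : K[X]}
    (hf : f ∣ X ^ Fintype.card K - X) (hg : ∀ a, f.IsRoot a → g.IsRoot a) : f ∣ g := by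
  have hP : (X ^ Fintype.card K - X : K[X]) ≠ 0 :=
    FiniteField.X_pow_card_sub_X_ne_zero K Fintype.one_lt_card
  rcases eq_or_ne g 0 with rfl | hg0
  · exact dvd_zero f
  have hsplit : (X ^ Fintype.card K - X : K[X]).Splits := by
    simpa [Nat.card_eq_fintype_card] using splits_X_pow_nat_card_sub_X (K := K)
  have hnodup : f.roots.Nodup := by
    refine Multiset.nodup_of_le (roots.le_of_dvd hP hf) ?_
    rw [FiniteField.roots_X_pow_card_sub_X]
    exact Finset.univ.nodup
  refine (hsplit.of_dvd hP hf).dvd_of_roots_le_roots (ne_zero_of_dvd_ne_zero hP hf) ?_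
  rw [Multiset.le_iff_subset hnodup]
  exact fun a ha => (mem_roots hg0).2 (hg a (isRoot_of_mem_roots ha))

end Polynomial

section Slices

variable {R : Type*} [CommRing R]

theorem eval_aeval_fin_two (a b : Polynomial R) (v : R) (f : MvPolynomial (Fin 2) R) :
    (aeval ![a, b] f).eval v = eval ![a.eval v, b.eval v] f := by
  rw [← Polynomial.coe_aeval_eq_eval, comp_aeval_apply, aeval_eq_eval]
  congr 2
  funext i
  fin_cases i <;> rfl

/-- Lagrange interpolation in `x₀` at the nodes `0` and `1`. -/
theorem X_zero_sq_sub_X_zero_dvd_sub_interpolation (f : MvPolynomial (Fin 2) R) :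
    (X 0 ^ 2 - X 0 : MvPolynomial (Fin 2) R) ∣
      f - ((1 - X 0) * Polynomial.aeval (X 1) (aeval ![0, (Polynomial.X : Polynomial R)] f) +
        X 0 * Polynomial.aeval (X 1) (aeval ![1, (Polynomial.X : Polynomial R)] f)) := by
  induction f using MvPolynomial.induction_on with
  | C c =>
    convert dvd_zero (X 0 ^ 2 - X 0 : MvPolynomial (Fin 2) R) using 1
    simp only [algHom_C, AlgHom.commutes, algebraMap_eq]
    ring
  | add f g hf hg =>
    convert dvd_add hf hg using 1
    simp only [map_add]
    ring
  | mul_X f i hf =>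
    set f₀ := Polynomial.aeval (X 1 : MvPolynomial (Fin 2) R)
      (aeval ![0, (Polynomial.X : Polynomial R)] f)
    set f₁ := Polynomial.aeval (X 1 : MvPolynomial (Fin 2) R)
      (aeval ![1, (Polynomial.X : Polynomial R)] f)
    fin_cases i
    · convert dvd_add (dvd_mul_of_dvd_right hf (X 0)) (dvd_mul_right _ (f₁ - f₀)) using 1
      simp only [Fin.zero_eta, map_mul, aeval_X, Matrix.cons_val_zero, map_zero, mul_zero,
        mul_one, f₀, f₁]
      ring
    · convert dvd_mul_of_dvd_right hf (X 1) using 1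
      simp only [Fin.mk_one, map_mul, aeval_X, Matrix.cons_val_one, Matrix.cons_val_fin_one,
        Polynomial.aeval_X, f₀, f₁]
      ring

theorem mem_span_of_dvd_slices (f : MvPolynomial (Fin 2) R) (t : Polynomial R)
    (h₀ : Polynomial.X - Polynomial.C 1 ∣ aeval ![0, (Polynomial.X : Polynomial R)] f)
    (h₁ : t ∣ aeval ![1, (Polynomial.X : Polynomial R)] f) :
    f ∈ Ideal.span {X 0 ^ 2 - X 0, (X 0 - 1) * (X 1 - 1), X 0 * Polynomial.aeval (X 1) t} := by
  obtain ⟨w, hw⟩ := X_zero_sq_sub_X_zero_dvd_sub_interpolation f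
  obtain ⟨u, hu⟩ := map_dvd (Polynomial.aeval (X 1 : MvPolynomial (Fin 2) R)) h₀
  obtain ⟨v, hv⟩ := map_dvd (Polynomial.aeval (X 1 : MvPolynomial (Fin 2) R)) h₁
  simp only [map_sub, Polynomial.aeval_X, map_one] at hu
  have hf : f = w * (X 0 ^ 2 - X 0) + -u * ((X 0 - 1) * (X 1 - 1)) +
      v * (X 0 * Polynomial.aeval (X 1) t) := by
    linear_combination hw + (1 - X 0) * hu + X 0 * hv
  rw [hf]
  refine add_mem (add_mem ?_ ?_) ?_ <;> exact Ideal.mul_mem_left _ _ (Ideal.subset_span (by simp))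

end Slices

theorem vanishing_ideal_trace_roots_general (p m ℓ q : ℕ) (hp : p.Prime) (hq : q = p ^ m)
    (L : Type) [Field L] [Fintype L]
    (hchar : ringChar L = p) (hL : Fintype.card L = q ^ (2 * ℓ))
    (f : MvPolynomial (Fin 2) L) :
    (∀ P : L × L,
        ((P.1 = 1 ∧ ∑ i ∈ Finset.range (2 * ℓ), P.2 ^ q ^ i = 0) ∨ P = (0, 1)) →
        MvPolynomial.eval ![P.1, P.2] f = 0) ↔
      f ∈ Ideal.span
        ({(X 0) ^ 2 - X 0, (X 1) ^ (q ^ (2 * ℓ)) - X 1, (X 0 - 1) * (X 1 - 1),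
          X 0 * ∑ i ∈ Finset.range (2 * ℓ), (X 1) ^ q ^ i} :
          Set (MvPolynomial (Fin 2) L)) := by
  subst hq
  have : CharP L p := hchar ▸ ringChar.charP L
  have : ExpChar L p := ExpChar.prime hp
  constructor
  · intro H
    have h₀ : Polynomial.X - Polynomial.C 1 ∣ aeval ![0, (Polynomial.X : Polynomial L)] f := by
      refine Polynomial.dvd_iff_isRoot.2 ?_
      simpa [eval_aeval_fin_two] using H (0, 1) (Or.inr rfl)
    have h₁ : ∑ i ∈ Finset.range (2 * ℓ), (Polynomial.X : Polynomial L) ^ (p ^ m) ^ i ∣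
        aeval ![1, (Polynomial.X : Polynomial L)] f := by
      refine Polynomial.dvd_of_dvd_X_pow_card_sub_X
        (hL ▸ Polynomial.sum_range_X_pow_pow_dvd_X_pow_sub_X p m (2 * ℓ)) fun a ha => ?_
      simpa [eval_aeval_fin_two] using
        H (1, a) (Or.inl ⟨rfl, by simpa [Polynomial.eval_finsetSum] using ha⟩)
    refine Ideal.span_mono ?_ (mem_span_of_dvd_slices f _ h₀ h₁)
    simp [Set.insert_subset_iff, map_sum]
  · intro hf P hP
    suffices Ideal.span _ ≤ RingHom.ker (eval ![P.1, P.2]) from this hf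
    have hfrob : P.2 ^ (p ^ m) ^ (2 * ℓ) = P.2 := hL ▸ FiniteField.pow_card P.2
    rw [Ideal.span_le]
    rcases hP with ⟨h1, htr⟩ | rfl
    · rintro g (rfl | rfl | rfl | rfl) <;> simp [h1, htr, hfrob]
    · rintro g (rfl | rfl | rfl | rfl) <;> simp

/-- The vanishing ideal of
`X_Tr = {(1, α) | Tr_ℓ(α) = 0} ∪ {(0, 1)}` is generated by `x₀² - x₀`,
`x₁^{q^{2ℓ}} - x₁`, `(x₀ - 1)(x₁ - 1)` and `x₀ · Tr_ℓ(x₁)`. -/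
theorem vanishing_ideal_trace_roots (p m ℓ q : ℕ) (hp : p.Prime) (hq : q = p ^ m)
    (hm : 0 < m) (hℓ : 0 < ℓ) (L : Type) [Field L] [Fintype L] [DecidableEq L]
    (hchar : ringChar L = p) (hL : Fintype.card L = q ^ (2 * ℓ))
    (f : MvPolynomial (Fin 2) L) :
    (∀ P : L × L,
        ((P.1 = 1 ∧ ∑ i ∈ Finset.range (2 * ℓ), P.2 ^ q ^ i = 0) ∨ P = (0, 1)) →
        MvPolynomial.eval ![P.1, P.2] f = 0) ↔
      f ∈ Ideal.span
        ({(X 0) ^ 2 - X 0, (X 1) ^ (q ^ (2 * ℓ)) - X 1, (X 0 - 1) * (X 1 - 1),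
          X 0 * ∑ i ∈ Finset.range (2 * ℓ), (X 1) ^ q ^ i} :
          Set (MvPolynomial (Fin 2) L)) :=
  vanishing_ideal_trace_roots_general p m ℓ q hp hq L hchar hL f
end
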